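/- In the setup below, let T be a bounded operator on ℓ²(Z) of finite propagation. Then T̂ is a compactly supported continuous function from G to C^{ru}_b(G): (i) for each y ∈ G, the function x ↦ T̂_y(x) is bounded, continuous, and right uniformly continuous on G; (ii) the map y ↦ T̂_y is continuous from G to C^{ru}_b(G) with the sup norm; (iii) the set {y ∈ G : T̂_y ≠ 0} is contained in a compact subset of G. -/

import Mathlib

open MeasureTheory Metric Bornology Filter Topology
open scoped ENNReal BoundedContinuousFunction

noncomputable section

/-- `ℓ²(X)` over `ℂ`. -/
abbrev l2 (X : Type*) : Type _ := lp (fun _ : X => ℂ) 2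

/-- The standard basis vector `δ_x` of `ℓ²(X)`. -/
def delta {X : Type*} (x : X) : l2 X := by classical exact lp.single 2 x 1

/-- The matrix entry `a_{x,y} = ⟨a δ_y, δ_x⟩` of a bounded operator on `ℓ²(X)`. -/
def entry {X : Type*} (a : l2 X →L[ℂ] l2 X) (x y : X) : ℂ := inner ℂ (delta x) (a (delta y))

/-- `d` is a proper left-invariant metric on the topological group `G` that induces
(is compatible with) its topology. -/
structure IsProperLeftInvariantCompatibleMetric (G : Type*) [Group G] [TopologicalSpace G]
    (d : G → G → ℝ) : Prop where
  refl : ∀ x, d x x = 0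
  eq_of : ∀ {x y}, d x y = 0 → x = y
  symm : ∀ x y, d x y = d y x
  triangle : ∀ x y z, d x z ≤ d x y + d y z
  left_invariant : ∀ g x y, d (g * x) (g * y) = d x y
  compatible : ∀ s : Set G, IsOpen s ↔ ∀ x ∈ s, ∃ ε > 0, ∀ y, d x y < ε → y ∈ s
  proper : ∀ (x : G) (r : ℝ), IsCompact {y : G | d x y ≤ r}

/-- The kernel `T̂` associated to a finite propagation operator `T` on `ℓ²(Z)`:
`T̂_y(x) = ∑_{z,w ∈ Z} φ_z(x) φ_w(xy) T_{z,w} Δ(y)^{-1/2}`, where `φ_z(g) = φ(z⁻¹g)`. -/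
def hatT {G : Type*} [Group G] (Δ : G → ℝ) (φ : G → ℝ) (Z : Set G)
    (T : l2 Z →L[ℂ] l2 Z) (y x : G) : ℂ :=
  ∑' (z : Z) (w : Z),
    ((φ ((z : G)⁻¹ * x) : ℝ) : ℂ) * ((φ ((w : G)⁻¹ * (x * y)) : ℝ) : ℂ) * entry T z w *
      (((Δ y ^ (-(1/2) : ℝ) : ℝ)) : ℂ)

/-!
Because `supp φ` lies in the closed `δ/4`-ball and `Z` is `δ`-separated, for `d 1 g < δ/4` at most
one lattice point `z` has `φ_z(a) ≠ 0` or `φ_z(a g) ≠ 0`. Hence `T̂_y(x) = K(x, x y) Δ(y)^{-1/2}`,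
where `K(a, b) = ∑ φ_z(a) φ_w(b) T_{z,w}` reduces to a single term. So `K` is bounded by
`‖φ‖_∞² ‖T‖`, vanishes once `d a b > Prop(T) + δ/2`, and is jointly right uniformly continuous
because the compactly supported `φ` is. The modular function is continuous, as
`Δ(y)⁻¹ ∫ f dμ = ∫ f(x y) dμ(x)` for every positive test function `f`, and continuity in `x`
follows from right uniform continuity.
-/

theorem HasCompactSupport.exists_forall_norm_mul_right_sub_lt {G E : Type*} [Group G]
    [TopologicalSpace G] [IsTopologicalGroup G] [SeminormedAddCommGroup E] {f : G → E}
    (hfc : HasCompactSupport f) (hf : Continuous f) {ε : ℝ} (hε : 0 < ε) :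
    ∃ V ∈ 𝓝 (1 : G), ∀ g ∈ V, ∀ x, ‖f (x * g) - f x‖ < ε := by
  let _ := IsTopologicalGroup.leftUniformSpace G
  obtain ⟨V, hV, hVε⟩ := mem_comap.1 (hfc.uniformContinuous_of_continuous hf
    (Metric.dist_mem_uniformity hε))
  refine ⟨V, hV, fun g hg x => ?_⟩
  rw [← dist_eq_norm, dist_comm]
  exact hVε (a := (x, x * g)) (by simpa using hg)

theorem continuous_of_forall_exists_norm_mul_right_sub_lt {G E : Type*} [Group G]
    [TopologicalSpace G] [IsTopologicalGroup G] [SeminormedAddCommGroup E] {f : G → E}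
    (hf : ∀ ε > 0, ∃ V ∈ 𝓝 (1 : G), ∀ g ∈ V, ∀ x, ‖f (x * g) - f x‖ < ε) : Continuous f := by
  refine continuous_iff_continuousAt.2 fun x₀ => Metric.tendsto_nhds.2 fun ε hε => ?_
  obtain ⟨V, hV, hVε⟩ := hf ε hε
  have hx₀ : Tendsto (fun x => x₀⁻¹ * x) (𝓝 x₀) (𝓝 1) := by
    simpa using (continuous_const_mul x₀⁻¹).tendsto x₀
  filter_upwards [hx₀ hV] with x hx
  simpa [dist_eq_norm] using hVε _ hx x₀

theorem continuous_integral_comp_mul_right {G : Type*} [Group G] [TopologicalSpace G]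
    [IsTopologicalGroup G] [LocallyCompactSpace G] [MeasurableSpace G] [BorelSpace G]
    (μ : Measure G) [μ.IsHaarMeasure] {f : G → ℝ}
    (hf : Continuous f) (hfc : HasCompactSupport f) :
    Continuous fun y => ∫ x, f (x * y) ∂μ := by
  convert continuous_integral_apply_inv_mul (μ := μ.inv) hf hfc using 2 with y
  rw [Measure.inv_def, integral_map measurable_inv.aemeasurable
    (f := fun x => f (x⁻¹ * y)) (by fun_prop : Continuous _).aestronglyMeasurable]
  simp only [inv_inv]

theorem continuous_of_map_mul_right_eq_smul {G : Type*} [Group G] [TopologicalSpace G]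
    [IsTopologicalGroup G] [LocallyCompactSpace G] [MeasurableSpace G] [BorelSpace G]
    (μ : Measure G) [μ.IsHaarMeasure] {Δ : G → ℝ} (hΔpos : ∀ y, 0 < Δ y)
    (hΔ : ∀ y, Measure.map (· * y) μ = ENNReal.ofReal (Δ y)⁻¹ • μ) : Continuous Δ := by
  obtain ⟨f, hfc, hf0, hf1⟩ := exists_continuous_nonneg_pos (1 : G)
  have hI : 0 < ∫ x, f x ∂μ :=
    f.continuous.integral_pos_of_hasCompactSupport_nonneg_nonzero hfc hf0 hf1
  have hf : ∀ y, ∫ x, f (x * y) ∂μ = (Δ y)⁻¹ * ∫ x, f x ∂μ := fun y => by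
    rw [← integral_map (measurable_mul_const y).aemeasurable f.continuous.aestronglyMeasurable,
      hΔ, integral_smul_measure, ENNReal.toReal_ofReal (inv_nonneg.2 (hΔpos y).le), smul_eq_mul]
  have hinv : Continuous fun y => (Δ y)⁻¹ := by
    simpa [hf, hI.ne'] using
      (continuous_integral_comp_mul_right μ f.continuous hfc).div_const (∫ x, f x ∂μ)
  exact (hinv.inv₀ fun y => (inv_pos.2 (hΔpos y)).ne').congr fun y => inv_inv (Δ y)

theorem norm_delta {X : Type*} (x : X) : ‖delta x‖ = 1 := by
  simp [delta]

theorem norm_entry_le {X : Type*} (a : l2 X →L[ℂ] l2 X) (x y : X) : ‖entry a x y‖ ≤ ‖a‖ := by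
  calc ‖entry a x y‖ ≤ ‖delta x‖ * ‖a (delta y)‖ := norm_inner_le_norm _ _
    _ ≤ ‖delta x‖ * (‖a‖ * ‖delta y‖) := by gcongr; exact a.le_opNorm _
    _ = ‖a‖ := by rw [norm_delta, norm_delta, one_mul, mul_one]

namespace IsProperLeftInvariantCompatibleMetric

variable {G : Type*} [Group G] [TopologicalSpace G] {d : G → G → ℝ}

theorem nonneg (hd : IsProperLeftInvariantCompatibleMetric G d) (x y : G) : 0 ≤ d x y := by
  linarith [hd.triangle x y x, hd.symm x y, hd.refl x]

theorem one_inv_mul (hd : IsProperLeftInvariantCompatibleMetric G d) (z x : G) :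
    d 1 (z⁻¹ * x) = d z x := by
  simpa using (hd.left_invariant z 1 (z⁻¹ * x)).symm

theorem mul_right (hd : IsProperLeftInvariantCompatibleMetric G d) (x g : G) :
    d x (x * g) = d 1 g := by
  simpa using hd.left_invariant x 1 g

theorem ball_mem_nhds (hd : IsProperLeftInvariantCompatibleMetric G d) (x : G) {r : ℝ}
    (hr : 0 < r) : {y | d x y < r} ∈ 𝓝 x := by
  refine IsOpen.mem_nhds ((hd.compatible _).2 fun y hy => ⟨r - d x y, sub_pos.2 hy, fun u hu => ?_⟩)
    (by simpa [hd.refl] using hr)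
  show d x u < r
  linarith [hd.triangle x y u]

end IsProperLeftInvariantCompatibleMetric

def latticeKernel {G : Type*} [Group G] (φ : G → ℝ) (Z : Set G) (T : l2 Z →L[ℂ] l2 Z)
    (a b : G) : ℂ :=
  ∑' (z : Z) (w : Z), (φ ((z : G)⁻¹ * a) : ℂ) * (φ ((w : G)⁻¹ * b) : ℂ) * entry T z w

section LatticeKernel

variable {G : Type*} [Group G] {φ : G → ℝ} {Z : Set G} (T : l2 Z →L[ℂ] l2 Z)

theorem hatT_eq_latticeKernel_mul (Δ : G → ℝ) (y x : G) :
    hatT Δ φ Z T y x = latticeKernel φ Z T x (x * y) * (Δ y ^ (-(1/2) : ℝ) : ℝ) := by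
  simp only [hatT, latticeKernel, tsum_mul_right]

theorem hatT_of_isEmpty [IsEmpty Z] (Δ : G → ℝ) (y x : G) : hatT Δ φ Z T y x = 0 := by
  simp [hatT]

theorem latticeKernel_eq_of_forall_ne {a b : G} {z₀ w₀ : Z}
    (ha : ∀ z ≠ z₀, φ ((z : G)⁻¹ * a) = 0) (hb : ∀ w ≠ w₀, φ ((w : G)⁻¹ * b) = 0) :
    latticeKernel φ Z T a b = φ ((z₀ : G)⁻¹ * a) * φ ((w₀ : G)⁻¹ * b) * entry T z₀ w₀ := by
  rw [latticeKernel, tsum_eq_single z₀ fun z hz => by simp [ha z hz]]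
  exact tsum_eq_single w₀ fun w hw => by simp [hb w hw]

variable [TopologicalSpace G] {d : G → G → ℝ} {δ : ℝ}

theorem latticeKernel_eq_zero_of_lt_dist (hd : IsProperLeftInvariantCompatibleMetric G d)
    (hφsupp : ∀ g, δ / 4 < d 1 g → φ g = 0) {P : ℝ}
    (hT : ∀ z w : Z, P < d z w → entry T z w = 0) {a b : G} (hab : P + δ / 2 < d a b) :
    latticeKernel φ Z T a b = 0 := by
  have hφ : ∀ (z : Z) (x : G), φ ((z : G)⁻¹ * x) ≠ 0 → d z x ≤ δ / 4 := fun z x hx => by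
    rw [← hd.one_inv_mul]; exact not_lt.1 (mt (hφsupp _) hx)
  refine (tsum_congr fun z => (tsum_congr fun w => ?_).trans tsum_zero).trans tsum_zero
  by_contra h
  simp only [mul_ne_zero_iff, Complex.ofReal_ne_zero] at h
  obtain ⟨⟨ha, hb⟩, hzw⟩ := h
  linarith [hφ z a ha, hφ w b hb, not_lt.1 (mt (hT z w) hzw), hd.triangle a z b,
    hd.triangle z w b, hd.symm z a]

theorem hatT_eq_zero_of_lt_dist (hd : IsProperLeftInvariantCompatibleMetric G d)
    (hφsupp : ∀ g, δ / 4 < d 1 g → φ g = 0) {P : ℝ}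
    (hT : ∀ z w : Z, P < d z w → entry T z w = 0) {Δ : G → ℝ} {y : G} (hy : P + δ / 2 < d 1 y)
    (x : G) : hatT Δ φ Z T y x = 0 := by
  rw [hatT_eq_latticeKernel_mul, latticeKernel_eq_zero_of_lt_dist T hd hφsupp hT
    (by rwa [hd.mul_right]), zero_mul]

theorem exists_forall_ne_eq_zero [Nonempty Z] (hd : IsProperLeftInvariantCompatibleMetric G d)
    (hsep : ∀ z ∈ Z, ∀ w ∈ Z, z ≠ w → δ ≤ d z w) (hφsupp : ∀ g, δ / 4 < d 1 g → φ g = 0)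
    (a : G) {g : G} (hg : d 1 g < δ / 4) :
    ∃ z₀ : Z, ∀ z ≠ z₀, φ ((z : G)⁻¹ * a) = 0 ∧ φ ((z : G)⁻¹ * (a * g)) = 0 := by
  have near : ∀ z : Z, ¬(φ ((z : G)⁻¹ * a) = 0 ∧ φ ((z : G)⁻¹ * (a * g)) = 0) →
      d z a < δ / 2 := by
    intro z hz
    rw [not_and_or] at hz
    rcases hz with hz | hz <;> have := not_lt.1 (mt (hφsupp _) hz) <;> rw [hd.one_inv_mul] at this
    · linarith [hd.nonneg 1 g]
    · linarith [hd.triangle z (a * g) a, hd.symm a (a * g), hd.mul_right a g]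
  by_cases h : ∃ z₀ : Z, ¬(φ ((z₀ : G)⁻¹ * a) = 0 ∧ φ ((z₀ : G)⁻¹ * (a * g)) = 0)
  · obtain ⟨z₀, hz₀⟩ := h
    refine ⟨z₀, fun z hz => by_contra fun hz' => ?_⟩
    linarith [near z hz', near z₀ hz₀, hd.triangle z a z₀, hd.symm z₀ a,
      hsep z z.2 z₀ z₀.2 (Subtype.coe_injective.ne hz)]
  · simp only [not_exists, not_not] at h
    exact ⟨Classical.arbitrary Z, fun z _ => h z⟩

end LatticeKernel

section LatticeKernelEstimates

variable {G : Type*} [Group G] [TopologicalSpace G] {d : G → G → ℝ} {Z : Set G} [Nonempty Z]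
  {δ : ℝ} {φ : G → ℝ} {M : ℝ} (T : l2 Z →L[ℂ] l2 Z)

theorem norm_latticeKernel_le (hd : IsProperLeftInvariantCompatibleMetric G d)
    (hsep : ∀ z ∈ Z, ∀ w ∈ Z, z ≠ w → δ ≤ d z w) (hφsupp : ∀ g, δ / 4 < d 1 g → φ g = 0)
    (hδ : 0 < δ) (hM : ∀ g, ‖φ g‖ ≤ M) (a b : G) :
    ‖latticeKernel φ Z T a b‖ ≤ M ^ 2 * ‖T‖ := by
  have h1 : d 1 (1 : G) < δ / 4 := by rw [hd.refl]; linarith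
  obtain ⟨z₀, hz₀⟩ := exists_forall_ne_eq_zero hd hsep hφsupp a h1
  obtain ⟨w₀, hw₀⟩ := exists_forall_ne_eq_zero hd hsep hφsupp b h1
  rw [latticeKernel_eq_of_forall_ne T (fun z hz => (hz₀ z hz).1) (fun w hw => (hw₀ w hw).1),
    norm_mul, norm_mul, Complex.norm_real, Complex.norm_real, sq]
  have hM0 : 0 ≤ M := (norm_nonneg _).trans (hM 1)
  gcongr
  exacts [hM _, hM _, norm_entry_le T _ _]

theorem norm_latticeKernel_mul_sub_le (hd : IsProperLeftInvariantCompatibleMetric G d)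
    (hsep : ∀ z ∈ Z, ∀ w ∈ Z, z ≠ w → δ ≤ d z w) (hφsupp : ∀ g, δ / 4 < d 1 g → φ g = 0)
    (hM : ∀ g, ‖φ g‖ ≤ M) {ω : ℝ} {g₁ g₂ : G} (hg₁ : d 1 g₁ < δ / 4) (hg₂ : d 1 g₂ < δ / 4)
    (hω₁ : ∀ u, ‖φ (u * g₁) - φ u‖ ≤ ω) (hω₂ : ∀ u, ‖φ (u * g₂) - φ u‖ ≤ ω) (a b : G) :
    ‖latticeKernel φ Z T (a * g₁) (b * g₂) - latticeKernel φ Z T a b‖ ≤ 2 * M * ω * ‖T‖ := by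
  obtain ⟨z₀, hz₀⟩ := exists_forall_ne_eq_zero hd hsep hφsupp a hg₁
  obtain ⟨w₀, hw₀⟩ := exists_forall_ne_eq_zero hd hsep hφsupp b hg₂
  rw [latticeKernel_eq_of_forall_ne T (fun z hz => (hz₀ z hz).2) (fun w hw => (hw₀ w hw).2),
    latticeKernel_eq_of_forall_ne T (fun z hz => (hz₀ z hz).1) (fun w hw => (hw₀ w hw).1)]
  have hα := hω₁ ((z₀ : G)⁻¹ * a)
  have hβ := hω₂ ((w₀ : G)⁻¹ * b)
  rw [mul_assoc] at hα hβ
  set α := φ ((z₀ : G)⁻¹ * a)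
  set α' := φ ((z₀ : G)⁻¹ * (a * g₁))
  set β := φ ((w₀ : G)⁻¹ * b)
  set β' := φ ((w₀ : G)⁻¹ * (b * g₂))
  have hM0 : 0 ≤ M := (norm_nonneg _).trans (hM 1)
  have hω0 : 0 ≤ ω := (norm_nonneg _).trans hα
  calc ‖(α' : ℂ) * β' * entry T z₀ w₀ - α * β * entry T z₀ w₀‖
      = ‖(α' - α) * β' + α * (β' - β)‖ * ‖entry T z₀ w₀‖ := by
        rw [← sub_mul, norm_mul, ← Complex.norm_real]; push_cast; ring_nf
    _ ≤ (ω * M + M * ω) * ‖T‖ := by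
        gcongr
        · refine (norm_add_le _ _).trans (add_le_add ?_ ?_) <;> rw [norm_mul]
          · exact mul_le_mul hα (hM _) (norm_nonneg _) hω0
          · exact mul_le_mul (hM _) hβ (norm_nonneg _) hM0
        · exact norm_entry_le T _ _
    _ = 2 * M * ω * ‖T‖ := by ring

theorem eventually_norm_latticeKernel_mul_sub_lt [IsTopologicalGroup G]
    (hd : IsProperLeftInvariantCompatibleMetric G d)
    (hsep : ∀ z ∈ Z, ∀ w ∈ Z, z ≠ w → δ ≤ d z w) (hφsupp : ∀ g, δ / 4 < d 1 g → φ g = 0)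
    (hδ : 0 < δ) (hφ : Continuous φ) (hφc : HasCompactSupport φ) {ε : ℝ} (hε : 0 < ε) :
    ∀ᶠ p : G × G in 𝓝 1, ∀ a b,
      ‖latticeKernel φ Z T (a * p.1) (b * p.2) - latticeKernel φ Z T a b‖ < ε := by
  obtain ⟨M, hM⟩ := hφ.bounded_above_of_compact_support hφc
  have hM0 : 0 ≤ M := (norm_nonneg _).trans (hM 1)
  have hA : 0 ≤ 2 * M * ‖T‖ := by positivity
  set ω := ε / (2 * M * ‖T‖ + 1)
  have hω : 0 < ω := div_pos hε (by linarith)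
  obtain ⟨V, hV, hVω⟩ := hφc.exists_forall_norm_mul_right_sub_lt hφ hω
  have hW : {g | d 1 g < δ / 4} ∩ V ∈ 𝓝 (1 : G) :=
    inter_mem (hd.ball_mem_nhds 1 (by linarith)) hV
  filter_upwards [prod_mem_nhds hW hW] with ⟨g₁, g₂⟩ ⟨⟨hg₁, hV₁⟩, hg₂, hV₂⟩ a b
  calc _ ≤ 2 * M * ω * ‖T‖ := norm_latticeKernel_mul_sub_le T hd hsep hφsupp hM hg₁ hg₂
          (fun u => (hVω g₁ hV₁ u).le) (fun u => (hVω g₂ hV₂ u).le) a b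
    _ < ε := by
      have : ω * (2 * M * ‖T‖ + 1) = ε := div_mul_cancel₀ _ (by linarith)
      linarith

end LatticeKernelEstimates

section HatT

variable {G : Type*} [Group G] [TopologicalSpace G] {d : G → G → ℝ} {Z : Set G} [Nonempty Z]
  {δ : ℝ} {φ : G → ℝ} {Δ : G → ℝ} (T : l2 Z →L[ℂ] l2 Z)

theorem norm_hatT_le (hd : IsProperLeftInvariantCompatibleMetric G d)
    (hsep : ∀ z ∈ Z, ∀ w ∈ Z, z ≠ w → δ ≤ d z w) (hφsupp : ∀ g, δ / 4 < d 1 g → φ g = 0)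
    (hδ : 0 < δ) {M : ℝ} (hM : ∀ g, ‖φ g‖ ≤ M) (hΔpos : ∀ y, 0 < Δ y) (y x : G) :
    ‖hatT Δ φ Z T y x‖ ≤ M ^ 2 * ‖T‖ * Δ y ^ (-(1/2) : ℝ) := by
  rw [hatT_eq_latticeKernel_mul, norm_mul, Complex.norm_real,
    Real.norm_of_nonneg (Real.rpow_nonneg (hΔpos y).le _)]
  exact mul_le_mul_of_nonneg_right (norm_latticeKernel_le T hd hsep hφsupp hδ hM _ _)
    (Real.rpow_nonneg (hΔpos y).le _)

variable [IsTopologicalGroup G]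

theorem exists_forall_norm_hatT_mul_right_sub_lt (hd : IsProperLeftInvariantCompatibleMetric G d)
    (hsep : ∀ z ∈ Z, ∀ w ∈ Z, z ≠ w → δ ≤ d z w) (hφsupp : ∀ g, δ / 4 < d 1 g → φ g = 0)
    (hδ : 0 < δ) (hφ : Continuous φ) (hφc : HasCompactSupport φ) (hΔpos : ∀ y, 0 < Δ y)
    (y : G) : ∀ ε > 0, ∃ V ∈ 𝓝 (1 : G), ∀ g ∈ V, ∀ x,
      ‖hatT Δ φ Z T y (x * g) - hatT Δ φ Z T y x‖ < ε := by
  intro ε hε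
  have hc : 0 < Δ y ^ (-(1/2) : ℝ) := Real.rpow_pos_of_pos (hΔpos y) _
  have hconj : Tendsto (fun g => (g, y⁻¹ * g * y)) (𝓝 1) (𝓝 (1 : G × G)) :=
    (continuous_id.prodMk (by fun_prop)).tendsto' _ _ (by simp)
  refine ⟨_, hconj.eventually
    (eventually_norm_latticeKernel_mul_sub_lt T hd hsep hφsupp hδ hφ hφc (div_pos hε hc)),
    fun g hg x => ?_⟩
  rw [hatT_eq_latticeKernel_mul, hatT_eq_latticeKernel_mul, ← sub_mul, norm_mul,
    Complex.norm_real, Real.norm_of_nonneg hc.le, ← lt_div_iff₀ hc]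
  simpa [mul_assoc] using hg x (x * y)

theorem exists_forall_norm_hatT_sub_le (hd : IsProperLeftInvariantCompatibleMetric G d)
    (hsep : ∀ z ∈ Z, ∀ w ∈ Z, z ≠ w → δ ≤ d z w) (hφsupp : ∀ g, δ / 4 < d 1 g → φ g = 0)
    (hδ : 0 < δ) (hφ : Continuous φ) (hφc : HasCompactSupport φ) (hΔpos : ∀ y, 0 < Δ y)
    (hΔ : Continuous Δ) (y₀ : G) : ∀ ε > 0, ∃ V ∈ 𝓝 y₀, ∀ y ∈ V, ∀ x,
      ‖hatT Δ φ Z T y x - hatT Δ φ Z T y₀ x‖ ≤ ε := by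
  intro ε hε
  obtain ⟨M, hM⟩ := hφ.bounded_above_of_compact_support hφc
  set B := M ^ 2 * ‖T‖
  have hB : 0 ≤ B := by positivity
  set c := fun y => Δ y ^ (-(1/2) : ℝ)
  have hc : Continuous c := hΔ.rpow_const fun y => Or.inl (hΔpos y).ne'
  have hc₀ : 0 < c y₀ := Real.rpow_pos_of_pos (hΔpos y₀) _
  have hshift : Tendsto (fun y => ((1 : G), y₀⁻¹ * y)) (𝓝 y₀) (𝓝 (1 : G × G)) :=
    (continuous_const.prodMk (by fun_prop)).tendsto' _ _ (by simp)
  have hK := hshift.eventually (eventually_norm_latticeKernel_mul_sub_lt T hd hsep hφsupp hδ hφ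
    hφc (div_pos (half_pos hε) hc₀))
  have hcy := Metric.tendsto_nhds.1 (hc.tendsto y₀) _
    (div_pos (half_pos hε) (by linarith : 0 < B + 1))
  refine ⟨_, hK.and hcy, fun y ⟨hKy, hcy⟩ x => ?_⟩
  rw [dist_eq_norm] at hcy
  have hsplit : hatT Δ φ Z T y x - hatT Δ φ Z T y₀ x =
      latticeKernel φ Z T x (x * y) * ((c y - c y₀ : ℝ) : ℂ) +
        (latticeKernel φ Z T (x * 1) (x * y₀ * (y₀⁻¹ * y)) - latticeKernel φ Z T x (x * y₀)) *
          (c y₀ : ℂ) := by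
    simp only [hatT_eq_latticeKernel_mul, c, mul_one, mul_inv_cancel_left, mul_assoc]
    push_cast; ring
  calc ‖hatT Δ φ Z T y x - hatT Δ φ Z T y₀ x‖
      ≤ B * (ε / 2 / (B + 1)) + ε / 2 / c y₀ * c y₀ := by
        rw [hsplit]
        refine (norm_add_le _ _).trans (add_le_add ?_ ?_) <;> rw [norm_mul, Complex.norm_real]
        · exact mul_le_mul (norm_latticeKernel_le T hd hsep hφsupp hδ hM _ _) hcy.le
            (norm_nonneg _) hB
        · rw [Real.norm_of_nonneg hc₀.le]
          exact mul_le_mul_of_nonneg_right (hKy x (x * y₀)).le hc₀.le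
    _ ≤ ε / 2 + ε / 2 := by
        gcongr
        · rw [mul_div_assoc', div_le_iff₀ (by linarith)]; nlinarith
        · rw [div_mul_cancel₀ _ hc₀.ne']
    _ = ε := add_halves ε

end HatT

theorem hatT_compactly_supported_continuous_general
    (G : Type*) [Group G] [TopologicalSpace G] [IsTopologicalGroup G]
    [LocallyCompactSpace G]
    [MeasurableSpace G] [BorelSpace G]
    (μ : Measure G) [μ.IsHaarMeasure]
    (Δ : G → ℝ) (hΔpos : ∀ y : G, 0 < Δ y)
    (hΔ : ∀ y : G, Measure.map (fun x => x * y) μ = ENNReal.ofReal (Δ y)⁻¹ • μ)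
    (d : G → G → ℝ) (hd : IsProperLeftInvariantCompatibleMetric G d)
    (Z : Set G)
    (δ : ℝ) (hδpos : 0 < δ)
    (hsep : ∀ z ∈ Z, ∀ w ∈ Z, z ≠ w → δ ≤ d z w)
    (φ : G → ℝ) (hφcont : Continuous φ)
    (hφsupp : ∀ g : G, δ / 4 < d 1 g → φ g = 0)
    (T : l2 Z →L[ℂ] l2 Z) (P : ℝ)
    (hT : ∀ z w : Z, P < d z w → entry T z w = 0) :
    (∀ y : G,
      (∃ C : ℝ, ∀ x : G, ‖hatT Δ φ Z T y x‖ ≤ C) ∧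
      Continuous (fun x : G => hatT Δ φ Z T y x) ∧
      (∀ ε > (0:ℝ), ∃ V ∈ nhds (1 : G), ∀ g ∈ V, ∀ x : G,
        ‖hatT Δ φ Z T y (x * g) - hatT Δ φ Z T y x‖ < ε)) ∧
    (∀ y₀ : G, ∀ ε > (0:ℝ), ∃ V ∈ nhds y₀, ∀ y ∈ V, ∀ x : G,
      ‖hatT Δ φ Z T y x - hatT Δ φ Z T y₀ x‖ ≤ ε) ∧
    (∃ Kc : Set G, IsCompact Kc ∧ ∀ y ∉ Kc, ∀ x : G, hatT Δ φ Z T y x = 0) := by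
  rcases isEmpty_or_nonempty Z with hZ | hZ
  · simp only [hatT_of_isEmpty, sub_self, norm_zero]
    exact ⟨fun _ => ⟨⟨0, fun _ => le_rfl⟩, continuous_const, fun ε hε => ⟨_, univ_mem,
      fun _ _ _ => hε⟩⟩, fun _ ε hε => ⟨_, univ_mem, fun _ _ _ => hε.le⟩,
      ⟨∅, isCompact_empty, fun _ _ _ => trivial⟩⟩
  have hφc : HasCompactSupport φ :=
    .intro (hd.proper 1 (δ / 4)) fun g hg => hφsupp g (not_le.1 hg)
  obtain ⟨M, hM⟩ := hφcont.bounded_above_of_compact_support hφc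
  have hruc := exists_forall_norm_hatT_mul_right_sub_lt T hd hsep hφsupp hδpos hφcont hφc hΔpos
  refine ⟨fun y => ⟨⟨_, norm_hatT_le T hd hsep hφsupp hδpos hM hΔpos y⟩,
      continuous_of_forall_exists_norm_mul_right_sub_lt (hruc y), hruc y⟩,
    exists_forall_norm_hatT_sub_le T hd hsep hφsupp hδpos hφcont hφc hΔpos
      (continuous_of_map_mul_right_eq_smul μ hΔpos hΔ),
    ⟨_, hd.proper 1 (P + δ / 2), fun y hy => hatT_eq_zero_of_lt_dist T hd hφsupp hT (not_le.1 hy)⟩⟩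

/-- For `T` of finite propagation, `T̂` is a compactly supported
continuous function from `G` to `C^{ru}_b(G)`. -/
theorem hatT_compactly_supported_continuous
    (G : Type*) [Group G] [TopologicalSpace G] [IsTopologicalGroup G]
    [LocallyCompactSpace G] [SecondCountableTopology G] [T2Space G]
    [MeasurableSpace G] [BorelSpace G]
    (μ : Measure G) [μ.IsHaarMeasure]
    (Δ : G → ℝ) (hΔpos : ∀ y : G, 0 < Δ y)
    (hΔ : ∀ y : G, Measure.map (fun x => x * y) μ = ENNReal.ofReal (Δ y)⁻¹ • μ)
    (d : G → G → ℝ) (hd : IsProperLeftInvariantCompatibleMetric G d)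
    (Z : Set G)
    (hZulf : ∀ S > (0:ℝ), ∃ N : ℕ, ∀ z ∈ Z,
      {x ∈ Z | d z x ≤ S}.Finite ∧ {x ∈ Z | d z x ≤ S}.ncard ≤ N)
    (δ : ℝ) (hδpos : 0 < δ)
    (hsep : ∀ z ∈ Z, ∀ w ∈ Z, z ≠ w → δ ≤ d z w)
    (hlat : ∃ R > (0:ℝ), ∀ x : G, ∃ z ∈ Z, d z x ≤ R)
    (φ : G → ℝ) (hφcont : Continuous φ) (hφnn : ∀ g : G, 0 ≤ φ g)
    (hφsupp : ∀ g : G, δ / 4 < d 1 g → φ g = 0)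
    (hφnorm : ∫ g, φ g ^ 2 ∂μ = 1)
    (T : l2 Z →L[ℂ] l2 Z) (P : ℝ) (hP : 0 ≤ P)
    (hT : ∀ z w : Z, P < d z w → entry T z w = 0) :
    (∀ y : G,
      (∃ C : ℝ, ∀ x : G, ‖hatT Δ φ Z T y x‖ ≤ C) ∧
      Continuous (fun x : G => hatT Δ φ Z T y x) ∧
      (∀ ε > (0:ℝ), ∃ V ∈ nhds (1 : G), ∀ g ∈ V, ∀ x : G,
        ‖hatT Δ φ Z T y (x * g) - hatT Δ φ Z T y x‖ < ε)) ∧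
    (∀ y₀ : G, ∀ ε > (0:ℝ), ∃ V ∈ nhds y₀, ∀ y ∈ V, ∀ x : G,
      ‖hatT Δ φ Z T y x - hatT Δ φ Z T y₀ x‖ ≤ ε) ∧
    (∃ Kc : Set G, IsCompact Kc ∧ ∀ y ∉ Kc, ∀ x : G, hatT Δ φ Z T y x = 0) :=
  hatT_compactly_supported_continuous_general G μ Δ hΔpos hΔ d hd Z δ hδpos hsep φ hφcont hφsupp T P
    hT
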